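/- Let X be a set, M a commutative family of transformations of X, and ≽ an M-coherent preorder on X. Define a relation ≽' on X by: x ≽' y if and only if there exist ω₁, …, ω_k ∈ M with (ω₁ ∘ ⋯ ∘ ω_k)(x) ≽ (ω₁ ∘ ⋯ ∘ ω_k)(y). Then ≽' is a preorder, ≽' is an extension of ≽, and ≽' is strongly M-coherent. -/

import Mathlib

/-- The strict part of a binary relation: `x ≻ y` iff `x ≽ y` and not `y ≽ x`. -/
def StrictRel {X : Type*} (R : X → X → Prop) (x y : X) : Prop := R x y ∧ ¬ R y x

/-- `R` is `M`-coherent: every `ω ∈ M` preserves the weak and the strict relation. -/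
def Coherent {X : Type*} (M : Set (X → X)) (R : X → X → Prop) : Prop :=
  ∀ ω ∈ M, ∀ x y : X, (R x y → R (ω x) (ω y)) ∧ (StrictRel R x y → StrictRel R (ω x) (ω y))

/-- `R` is strongly `M`-coherent: coherent, and the converse implications also hold. -/
def StronglyCoherent {X : Type*} (M : Set (X → X)) (R : X → X → Prop) : Prop :=
  Coherent M R ∧
    ∀ ω ∈ M, ∀ x y : X, (R (ω x) (ω y) → R x y) ∧ (StrictRel R (ω x) (ω y) → StrictRel R x y)

/-- `R` is acyclic: there is no `k ≥ 2` and distinct `x₁, …, x_k` with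
`x₁ ≽ x₂ ≽ … ≽ x_k` and `x_k ≻ x₁`.  (Indices here run from `0` to `k-1`.) -/
def Acyclic {X : Type*} (R : X → X → Prop) : Prop :=
  ¬ ∃ (k : ℕ) (x : ℕ → X), 2 ≤ k ∧
      (∀ i j, i < k → j < k → x i = x j → i = j) ∧
      (∀ i, i + 1 < k → R (x i) (x (i + 1))) ∧
      StrictRel R (x (k - 1)) (x 0)

/-- `R'` is an extension of `R`. -/
def IsExtension {X : Type*} (R R' : X → X → Prop) : Prop :=
  (∀ x y, R x y → R' x y) ∧ (∀ x y, StrictRel R x y → StrictRel R' x y)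

/-- A commutative family of transformations: nonempty, pairwise commuting, containing
the identity, and closed under composition. -/
def CommFamily {X : Type*} (M : Set (X → X)) : Prop :=
  M.Nonempty ∧ (∀ f ∈ M, ∀ g ∈ M, f ∘ g = g ∘ f) ∧ (id ∈ M) ∧ (∀ f ∈ M, ∀ g ∈ M, f ∘ g ∈ M)


/-- The composition `ω₁ ∘ ⋯ ∘ ω_k` of a finite list of transformations. -/
def compList {X : Type*} (l : List (X → X)) : X → X := l.foldr (· ∘ ·) id

/-- The relation `≽'` defined by: `x ≽' y` iff there are `ω₁, …, ω_k ∈ M` with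
`(ω₁ ∘ ⋯ ∘ ω_k)(x) ≽ (ω₁ ∘ ⋯ ∘ ω_k)(y)`. -/
def ExtRel {X : Type*} (M : Set (X → X)) (R : X → X → Prop) (x y : X) : Prop :=
  ∃ l : List (X → X), l ≠ [] ∧ (∀ f ∈ l, f ∈ M) ∧ R (compList l x) (compList l y)

/-- If `M` is a commutative family and `≽` is an `M`-coherent preorder, then the relation
`≽'` defined above is a preorder, an extension of `≽`, and is strongly `M`-coherent. -/
theorem extRel_strongly_coherent_preorder_extension {X : Type*} (M : Set (X → X))
    (R : X → X → Prop) (hM : CommFamily M) (hrefl : Reflexive R) (htrans : Transitive R)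
    (hcoh : Coherent M R) :
    Reflexive (ExtRel M R) ∧ Transitive (ExtRel M R) ∧ IsExtension R (ExtRel M R) ∧
      StronglyCoherent M (ExtRel M R) := by
  obtain ⟨-, hcomm, hid, hcomp⟩ := hM
  have hmono : ∀ ω ∈ M, ∀ x y, R x y → R (ω x) (ω y) :=
    fun ω hω x y h => ((hcoh ω hω x y).1 h)
  have hmem : ∀ l : List (X → X), (∀ f ∈ l, f ∈ M) → compList l ∈ M := by
    intro l
    induction l with
    | nil => intro _; exact hid
    | cons f t ih =>
      intro hl
      exact hcomp f (hl f List.mem_cons_self) (compList t)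
        (ih fun g hg => hl g (List.mem_cons_of_mem _ hg))
  have hiff : ∀ x y, ExtRel M R x y ↔ ∃ ω ∈ M, R (ω x) (ω y) := by
    intro x y
    constructor
    · rintro ⟨l, -, hl, hR⟩; exact ⟨compList l, hmem l hl, hR⟩
    · rintro ⟨ω, hω, hR⟩
      exact ⟨[ω], by simp, by simp [hω], hR⟩
  have hext_iff : ∀ ω ∈ M, ∀ x y, ExtRel M R (ω x) (ω y) ↔ ExtRel M R x y := by
    intro ω hω x y
    constructor
    · intro h
      obtain ⟨σ, hσ, hR⟩ := (hiff _ _).1 h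
      exact (hiff _ _).2 ⟨σ ∘ ω, hcomp σ hσ ω hω, hR⟩
    · intro h
      obtain ⟨σ, hσ, hR⟩ := (hiff _ _).1 h
      have h1 := hmono ω hω _ _ hR
      have e1 : ω (σ x) = σ (ω x) := congrFun (hcomm ω hω σ hσ) x
      have e2 : ω (σ y) = σ (ω y) := congrFun (hcomm ω hω σ hσ) y
      rw [e1, e2] at h1
      exact (hiff _ _).2 ⟨σ, hσ, h1⟩
  refine ⟨?_, ?_, ⟨?_, ?_⟩, ?_, ?_⟩
  · intro x
    exact (hiff x x).2 ⟨id, hid, hrefl _⟩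
  · intro x y z hxy hyz
    obtain ⟨ω, hω, h1⟩ := (hiff _ _).1 hxy
    obtain ⟨σ, hσ, h2⟩ := (hiff _ _).1 hyz
    have h1' := hmono σ hσ _ _ h1
    have h2' := hmono ω hω _ _ h2
    have e1 : ω (σ y) = σ (ω y) := congrFun (hcomm ω hω σ hσ) y
    have e2 : ω (σ z) = σ (ω z) := congrFun (hcomm ω hω σ hσ) z
    rw [e1, e2] at h2'
    exact (hiff _ _).2 ⟨σ ∘ ω, hcomp σ hσ ω hω, htrans h1' h2'⟩
  · intro x y h
    exact (hiff _ _).2 ⟨id, hid, h⟩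
  · intro x y h
    refine ⟨(hiff _ _).2 ⟨id, hid, h.1⟩, fun habs => ?_⟩
    obtain ⟨ω, hω, hR⟩ := (hiff _ _).1 habs
    exact ((hcoh ω hω x y).2 h).2 hR
  · intro ω hω x y
    exact ⟨(hext_iff ω hω x y).2,
      fun h => ⟨(hext_iff ω hω x y).2 h.1, fun habs => h.2 ((hext_iff ω hω y x).1 habs)⟩⟩
  · intro ω hω x y
    exact ⟨(hext_iff ω hω x y).1,
      fun h => ⟨(hext_iff ω hω x y).1 h.1, fun habs => h.2 ((hext_iff ω hω y x).2 habs)⟩⟩
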